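/- Normality: if Γ ⊢ t ⇐ A (t is a normal form in the bidirectional sense), then Γ ⊢ t : A and there is no term t' such that t ⇝ t' in one step. -/
import Mathlib


namespace STLCp

/-- Types of the simply-typed λ-calculus with sums, over base types `B`. -/
inductive Ty (B : Type) : Type
  | base : B → Ty B
  | unit : Ty B
  | empty : Ty B
  | prod : Ty B → Ty B → Ty B
  | sum : Ty B → Ty B → Ty B
  | arr : Ty B → Ty B → Ty B

/-- Terms (de Bruijn style) over a set of constants `C`. -/
inductive Tm (C : Type) : Type
  | cst : C → Tm C
  | var : Nat → Tm C
  | star : Tm C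
  | pair : Tm C → Tm C → Tm C
  | proj1 : Tm C → Tm C
  | proj2 : Tm C → Tm C
  | lam : Tm C → Tm C
  | app : Tm C → Tm C → Tm C
  | inl : Tm C → Tm C
  | inr : Tm C → Tm C
  | raise : Tm C → Tm C
  | case : Tm C → Tm C → Tm C → Tm C

variable {B C : Type}

/-- Lifting a renaming under a binder. -/
def liftRen (ρ : Nat → Nat) : Nat → Nat
  | 0 => 0
  | n + 1 => ρ n + 1

/-- Action of renamings on terms. -/
def rename (ρ : Nat → Nat) : Tm C → Tm C
  | .cst c => .cst c
  | .var n => .var (ρ n)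
  | .star => .star
  | .pair t u => .pair (rename ρ t) (rename ρ u)
  | .proj1 t => .proj1 (rename ρ t)
  | .proj2 t => .proj2 (rename ρ t)
  | .lam t => .lam (rename (liftRen ρ) t)
  | .app t u => .app (rename ρ t) (rename ρ u)
  | .inl t => .inl (rename ρ t)
  | .inr t => .inr (rename ρ t)
  | .raise t => .raise (rename ρ t)
  | .case s bl br => .case (rename ρ s) (rename (liftRen ρ) bl) (rename (liftRen ρ) br)

/-- Lifting a parallel substitution under a binder. -/
def liftSub (σ : Nat → Tm C) : Nat → Tm C
  | 0 => .var 0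
  | n + 1 => rename Nat.succ (σ n)

/-- Action of parallel substitutions on terms, `t[σ]`. -/
def subst (σ : Nat → Tm C) : Tm C → Tm C
  | .cst c => .cst c
  | .var n => σ n
  | .star => .star
  | .pair t u => .pair (subst σ t) (subst σ u)
  | .proj1 t => .proj1 (subst σ t)
  | .proj2 t => .proj2 (subst σ t)
  | .lam t => .lam (subst (liftSub σ) t)
  | .app t u => .app (subst σ t) (subst σ u)
  | .inl t => .inl (subst σ t)
  | .inr t => .inr (subst σ t)
  | .raise t => .raise (subst σ t)
  | .case s bl br => .case (subst σ s) (subst (liftSub σ) bl) (subst (liftSub σ) br)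

/-- The substitution `u..`: maps the last variable to `u`, the identity elsewhere. -/
def sub0 (u : Tm C) : Nat → Tm C
  | 0 => u
  | n + 1 => .var n

/-- Eliminations: application, projections and case analysis. -/
inductive Elim (C : Type) : Type
  | eapp : Tm C → Elim C
  | eproj1 : Elim C
  | eproj2 : Elim C
  | ecase : Tm C → Tm C → Elim C

/-- Plugging a term into an elimination, `e[t]`. -/
def plug : Elim C → Tm C → Tm C
  | .eapp u, t => .app t u
  | .eproj1, t => .proj1 t
  | .eproj2, t => .proj2 t
  | .ecase bl br, t => .case t bl br

/-- Weakening the contents of an elimination (used when pushing it under a binder). -/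
def weakenElim : Elim C → Elim C
  | .eapp u => .eapp (rename Nat.succ u)
  | .eproj1 => .eproj1
  | .eproj2 => .eproj2
  | .ecase bl br => .ecase (rename (liftRen Nat.succ) bl) (rename (liftRen Nat.succ) br)

/-- The β-rules. -/
inductive BetaBase : Tm C → Tm C → Prop
  | proj1 (t u : Tm C) : BetaBase (.proj1 (.pair t u)) t
  | proj2 (t u : Tm C) : BetaBase (.proj2 (.pair t u)) u
  | app (t u : Tm C) : BetaBase (.app (.lam t) u) (subst (sub0 u) t)
  | case_inl (a bl br : Tm C) : BetaBase (.case (.inl a) bl br) (subst (sub0 a) bl)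
  | case_inr (b bl br : Tm C) : BetaBase (.case (.inr b) bl br) (subst (sub0 b) br)

/-- The commuting-conversion rules. -/
inductive CCBase : Tm C → Tm C → Prop
  | raise (e : Elim C) (t : Tm C) : CCBase (plug e (.raise t)) (.raise t)
  | case (e : Elim C) (s bl br : Tm C) :
      CCBase (plug e (.case s bl br))
        (.case s (plug (weakenElim e) bl) (plug (weakenElim e) br))

/-- Congruence closure of a base relation on terms. -/
inductive Cong (R : Tm C → Tm C → Prop) : Tm C → Tm C → Prop
  | base : R t u → Cong R t u
  | pairL : Cong R t t' → Cong R (.pair t u) (.pair t' u)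
  | pairR : Cong R u u' → Cong R (.pair t u) (.pair t u')
  | proj1 : Cong R t t' → Cong R (.proj1 t) (.proj1 t')
  | proj2 : Cong R t t' → Cong R (.proj2 t) (.proj2 t')
  | lam : Cong R t t' → Cong R (.lam t) (.lam t')
  | appL : Cong R t t' → Cong R (.app t u) (.app t' u)
  | appR : Cong R u u' → Cong R (.app t u) (.app t u')
  | inl : Cong R t t' → Cong R (.inl t) (.inl t')
  | inr : Cong R t t' → Cong R (.inr t) (.inr t')
  | raise : Cong R t t' → Cong R (.raise t) (.raise t')
  | caseS : Cong R s s' → Cong R (.case s bl br) (.case s' bl br)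
  | caseL : Cong R bl bl' → Cong R (.case s bl br) (.case s bl' br)
  | caseR : Cong R br br' → Cong R (.case s bl br) (.case s bl br')

/-- One-step β-reduction. -/
def StepBeta : Tm C → Tm C → Prop := Cong BetaBase

/-- One-step commuting-conversion reduction. -/
def StepCC : Tm C → Tm C → Prop := Cong CCBase

/-- One-step reduction (β-rules together with commuting conversions). -/
def Step : Tm C → Tm C → Prop := Cong (fun t u => BetaBase t u ∨ CCBase t u)

/-- Reflexive-transitive closures. -/
def RedsBeta : Tm C → Tm C → Prop := Relation.ReflTransGen StepBeta
def RedsCC : Tm C → Tm C → Prop := Relation.ReflTransGen StepCC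
def Reds : Tm C → Tm C → Prop := Relation.ReflTransGen Step

/-- Typing judgment `Γ ⊢ t : A` over a language given by `tyof : C → Ty B`.
Contexts are lists of types, the head being the last-bound variable. -/
inductive HasType (tyof : C → Ty B) : List (Ty B) → Tm C → Ty B → Prop
  | cst (Γ) (c : C) : HasType tyof Γ (.cst c) (tyof c)
  | var : Γ[n]? = some A → HasType tyof Γ (.var n) A
  | star : HasType tyof Γ .star .unit
  | pair : HasType tyof Γ t A → HasType tyof Γ u A' →
      HasType tyof Γ (.pair t u) (.prod A A')
  | proj1 : HasType tyof Γ p (.prod A A') → HasType tyof Γ (.proj1 p) A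
  | proj2 : HasType tyof Γ p (.prod A A') → HasType tyof Γ (.proj2 p) A'
  | lam : HasType tyof (A :: Γ) t A' → HasType tyof Γ (.lam t) (.arr A A')
  | app : HasType tyof Γ t (.arr A A') → HasType tyof Γ u A →
      HasType tyof Γ (.app t u) A'
  | raise : HasType tyof Γ t .empty → HasType tyof Γ (.raise t) A
  | inl : HasType tyof Γ a A → HasType tyof Γ (.inl a) (.sum A A')
  | inr : HasType tyof Γ b A' → HasType tyof Γ (.inr b) (.sum A A')
  | case : HasType tyof Γ s (.sum A A') → HasType tyof (A :: Γ) bl T →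
      HasType tyof (A' :: Γ) br T → HasType tyof Γ (.case s bl br) T

mutual
  /-- Bidirectional checking judgment `Γ ⊢ t ⇐ A` (normal forms). -/
  inductive Check (tyof : C → Ty B) : List (Ty B) → Tm C → Ty B → Prop
    | star : Check tyof Γ .star .unit
    | pair : Check tyof Γ t A → Check tyof Γ u A' →
        Check tyof Γ (.pair t u) (.prod A A')
    | lam : Check tyof (A :: Γ) t A' → Check tyof Γ (.lam t) (.arr A A')
    | inl : Check tyof Γ a A → Check tyof Γ (.inl a) (.sum A A')
    | inr : Check tyof Γ b A' → Check tyof Γ (.inr b) (.sum A A')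
    | demote : Infer tyof Γ t A → A = A' → Check tyof Γ t A'
    | raise : Infer tyof Γ t .empty → Check tyof Γ (.raise t) A
    | case : Infer tyof Γ s (.sum A A') → Check tyof (A :: Γ) bl T →
        Check tyof (A' :: Γ) br T → Check tyof Γ (.case s bl br) T

  /-- Bidirectional inference judgment `Γ ⊢ t ⇒ A` (neutral forms). -/
  inductive Infer (tyof : C → Ty B) : List (Ty B) → Tm C → Ty B → Prop
    | cst (Γ) (c : C) : Infer tyof Γ (.cst c) (tyof c)
    | var : Γ[n]? = some A → Infer tyof Γ (.var n) A
    | proj1 : Infer tyof Γ p (.prod A A') → Infer tyof Γ (.proj1 p) A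
    | proj2 : Infer tyof Γ p (.prod A A') → Infer tyof Γ (.proj2 p) A'
    | app : Infer tyof Γ t (.arr A A') → Check tyof Γ u A →
        Infer tyof Γ (.app t u) A'
end

/-- The substitution replacing the last variable by `inl` of itself
(used in the η-law for sums). -/
def inlSub : Nat → Tm C
  | 0 => .inl (.var 0)
  | n + 1 => .var (n + 1)

/-- The substitution replacing the last variable by `inr` of itself. -/
def inrSub : Nat → Tm C
  | 0 => .inr (.var 0)
  | n + 1 => .var (n + 1)

/-- Conversion `Γ ⊢ t ≡ u : A`: the least congruent equivalence relation on
well-typed terms containing the β and η laws for all type formers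
(the equational theory of bicartesian closed categories). -/
inductive Conv (tyof : C → Ty B) : List (Ty B) → Tm C → Tm C → Ty B → Prop
  | refl : HasType tyof Γ t A → Conv tyof Γ t t A
  | symm : Conv tyof Γ t u A → Conv tyof Γ u t A
  | trans : Conv tyof Γ t u A → Conv tyof Γ u v A → Conv tyof Γ t v A
  -- congruence
  | pair : Conv tyof Γ t t' A → Conv tyof Γ u u' A' →
      Conv tyof Γ (.pair t u) (.pair t' u') (.prod A A')
  | proj1 : Conv tyof Γ p p' (.prod A A') → Conv tyof Γ (.proj1 p) (.proj1 p') A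
  | proj2 : Conv tyof Γ p p' (.prod A A') → Conv tyof Γ (.proj2 p) (.proj2 p') A'
  | lam : Conv tyof (A :: Γ) t t' A' → Conv tyof Γ (.lam t) (.lam t') (.arr A A')
  | app : Conv tyof Γ t t' (.arr A A') → Conv tyof Γ u u' A →
      Conv tyof Γ (.app t u) (.app t' u') A'
  | inl : Conv tyof Γ a a' A → Conv tyof Γ (.inl a) (.inl a') (.sum A A')
  | inr : Conv tyof Γ b b' A' → Conv tyof Γ (.inr b) (.inr b') (.sum A A')
  | raise : Conv tyof Γ t t' .empty → Conv tyof Γ (.raise t) (.raise t') A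
  | case : Conv tyof Γ s s' (.sum A A') → Conv tyof (A :: Γ) bl bl' T →
      Conv tyof (A' :: Γ) br br' T →
      Conv tyof Γ (.case s bl br) (.case s' bl' br') T
  -- β laws
  | beta_proj1 : HasType tyof Γ t A → HasType tyof Γ u A' →
      Conv tyof Γ (.proj1 (.pair t u)) t A
  | beta_proj2 : HasType tyof Γ t A → HasType tyof Γ u A' →
      Conv tyof Γ (.proj2 (.pair t u)) u A'
  | beta_app : HasType tyof (A :: Γ) t A' → HasType tyof Γ u A →
      Conv tyof Γ (.app (.lam t) u) (subst (sub0 u) t) A'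
  | beta_inl : HasType tyof Γ a A → HasType tyof (A :: Γ) bl T →
      HasType tyof (A' :: Γ) br T →
      Conv tyof Γ (.case (.inl a) bl br) (subst (sub0 a) bl) T
  | beta_inr : HasType tyof Γ b A' → HasType tyof (A :: Γ) bl T →
      HasType tyof (A' :: Γ) br T →
      Conv tyof Γ (.case (.inr b) bl br) (subst (sub0 b) br) T
  -- η laws
  | eta_unit : HasType tyof Γ t .unit → Conv tyof Γ t .star .unit
  | eta_prod : HasType tyof Γ t (.prod A A') →
      Conv tyof Γ t (.pair (.proj1 t) (.proj2 t)) (.prod A A')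
  | eta_arr : HasType tyof Γ t (.arr A A') →
      Conv tyof Γ t (.lam (.app (rename Nat.succ t) (.var 0))) (.arr A A')
  | eta_empty : HasType tyof Γ s .empty → HasType tyof Γ u T →
      Conv tyof Γ u (.raise s) T
  | eta_sum : HasType tyof Γ s (.sum A A') → HasType tyof (.sum A A' :: Γ) u T →
      Conv tyof Γ (subst (sub0 s) u)
        (.case s (subst inlSub u) (subst inrSub u)) T

/-- `t` is covered by the predicate `F`: `t` is a case tree whose nodes are
eliminations of neutrals at positive types and whose leaves satisfy `F`
(in suitably extended contexts). -/
inductive Covered (tyof : C → Ty B) (F : List (Ty B) → Tm C → Prop) :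
    List (Ty B) → Tm C → Prop
  | leaf : F Γ t → Covered tyof F Γ t
  | raise : Infer tyof Γ n .empty → Covered tyof F Γ (.raise n)
  | case : Infer tyof Γ n (.sum A A') → Covered tyof F (A :: Γ) bl →
      Covered tyof F (A' :: Γ) br → Covered tyof F Γ (.case n bl br)

/-- `ρ` is a (typed) renaming from `Δ` to `Γ`. -/
def IsRen (ρ : Nat → Nat) (Δ Γ : List (Ty B)) : Prop :=
  ∀ n A, Γ[n]? = some A → Δ[ρ n]? = some A

/-- Values at a type, defined by induction on the type (logical relation). -/
def Value (tyof : C → Ty B) : Ty B → List (Ty B) → Tm C → Prop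
  | .base b => Covered tyof (fun Δ u => Infer tyof Δ u (.base b))
  | .empty => Covered tyof (fun Δ u => Infer tyof Δ u .empty)
  | .sum A A' => Covered tyof (fun Δ u =>
      Infer tyof Δ u (.sum A A') ∨
      (∃ a, u = .inl a ∧ Value tyof A Δ a) ∨
      (∃ b, u = .inr b ∧ Value tyof A' Δ b))
  | .unit => fun Γ t => Check tyof Γ t .unit
  | .prod A A' => fun Γ t => Check tyof Γ t (.prod A A') ∧
      (∃ v, Reds (.proj1 t) v ∧ Value tyof A Γ v) ∧
      (∃ v, Reds (.proj2 t) v ∧ Value tyof A' Γ v)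
  | .arr A A' => fun Γ t => Check tyof Γ t (.arr A A') ∧
      ∀ Δ ρ, IsRen ρ Δ Γ → ∀ u, Value tyof A Δ u →
        ∃ v, Reds (.app (rename ρ t) u) v ∧ Value tyof A' Δ v

/-- `t` is reducible at `T` in `Γ`: it reduces to a value at `T`. -/
def Reducible (tyof : C → Ty B) (T : Ty B) (Γ : List (Ty B)) (t : Tm C) : Prop :=
  ∃ v, Reds t v ∧ Value tyof T Γ v

/-- Polarised vocabulary of a type: `voc true A = A⁺`, `voc false A = A⁻`. -/
def voc (p : Bool) : Ty B → Set B
  | .base b => if p then {b} else ∅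
  | .unit => ∅
  | .empty => ∅
  | .prod A A' => voc p A ∪ voc p A'
  | .sum A A' => voc p A ∪ voc p A'
  | .arr A A' => voc (!p) A ∪ voc p A'

/-- Polarised vocabulary of a context. -/
def vocCtx (p : Bool) (Γ : List (Ty B)) : Set B :=
  {b | ∃ A ∈ Γ, b ∈ voc p A}

/-- Context partitions `Γ = Γs ⋈ Γt`. -/
inductive Splits {B : Type} : List (Ty B) → List (Ty B) → List (Ty B) → Type
  | nil : Splits [] [] []
  | left (A : Ty B) : Splits Γ Γs Γt → Splits (A :: Γ) (A :: Γs) Γt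
  | right (A : Ty B) : Splits Γ Γs Γt → Splits (A :: Γ) Γs (A :: Γt)

/-- The renaming embedding `Γs` into `Γ` induced by a partition. -/
def Splits.renS {B : Type} : {Γ Γs Γt : List (Ty B)} → Splits Γ Γs Γt → Nat → Nat
  | _, _, _, .nil => id
  | _, _, _, .left _ s => fun n => match n with | 0 => 0 | m + 1 => s.renS m + 1
  | _, _, _, .right _ s => fun n => s.renS n + 1

/-- The renaming embedding `Γt` into `Γ` induced by a partition. -/
def Splits.renT {B : Type} : {Γ Γs Γt : List (Ty B)} → Splits Γ Γs Γt → Nat → Nat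
  | _, _, _, .nil => id
  | _, _, _, .left _ s => fun n => s.renT n + 1
  | _, _, _, .right _ s => fun n => match n with | 0 => 0 | m + 1 => s.renT m + 1

/-- The composite `r[l..]` where `l` lives in one part of the context
(embedded via `ρl`) and the tail variables of `r` live in the other part
(embedded via `ρr`); the result lives in the full context. -/
def splice (ρl ρr : Nat → Nat) (l r : Tm C) : Tm C :=
  subst (fun n => match n with
    | 0 => rename ρl l
    | m + 1 => .var (ρr m)) r

/-- The (empty) constant-typing function for a language without constants. -/
def noCst {B : Type} : Empty → Ty B := fun c => c.elim

/-- The set of constants occurring in a term. -/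
def constsOf : Tm C → Set C
  | .cst c => {c}
  | .var _ => ∅
  | .star => ∅
  | .pair t u => constsOf t ∪ constsOf u
  | .proj1 t => constsOf t
  | .proj2 t => constsOf t
  | .lam t => constsOf t
  | .app t u => constsOf t ∪ constsOf u
  | .inl t => constsOf t
  | .inr t => constsOf t
  | .raise t => constsOf t
  | .case s bl br => constsOf s ∪ constsOf bl ∪ constsOf br


/-- Neutral shapes: heads of inferable terms. -/
def Neutral : Tm C → Prop
  | .cst _ => True
  | .var _ => True
  | .proj1 _ => True
  | .proj2 _ => True
  | .app _ _ => True
  | _ => False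

def NoStep (t : Tm C) : Prop := ¬ ∃ t' : Tm C, Step t t'

lemma ccbase_inv {x y : Tm C} (h : CCBase x y) :
    ∃ e s, x = plug e s ∧
      ((∃ t, s = .raise t) ∨ (∃ a b c, s = .case a b c)) := by
  cases h with
  | raise e t => exact ⟨e, _, rfl, .inl ⟨t, rfl⟩⟩
  | case e s bl br => exact ⟨e, _, rfl, .inr ⟨s, bl, br, rfl⟩⟩

lemma neutral_not_scrutinee {s : Tm C} (hn : Neutral s)
    (h : (∃ t, s = .raise t) ∨ (∃ a b c, s = .case a b c)) : False := by
  rcases h with ⟨t, rfl⟩ | ⟨a, b, c, rfl⟩ <;> simp [Neutral] at hn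

theorem normal_bidir_aux {B C : Type} (tyof : C → Ty B)
    {Γ : List (Ty B)} {t : Tm C} {A : Ty B} (h : Check tyof Γ t A) :
    HasType tyof Γ t A ∧ NoStep t := by
  induction h using Check.rec
    (motive_2 := fun Γ t A _ => (HasType tyof Γ t A ∧ NoStep t) ∧ Neutral t) with
  | star =>
    refine ⟨.star, ?_⟩
    rintro ⟨t', hs⟩
    cases hs with
    | base hb =>
      rcases hb with hb | hb
      · cases hb
      · obtain ⟨e, s, heq, hsh⟩ := ccbase_inv hb
        cases e <;> simp [plug] at heq
  | pair h1 h2 ih1 ih2 =>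
    refine ⟨.pair ih1.1 ih2.1, ?_⟩
    rintro ⟨t', hs⟩
    cases hs with
    | base hb =>
      rcases hb with hb | hb
      · cases hb
      · obtain ⟨e, s, heq, hsh⟩ := ccbase_inv hb
        cases e <;> simp [plug] at heq
    | pairL h => exact ih1.2 ⟨_, h⟩
    | pairR h => exact ih2.2 ⟨_, h⟩
  | lam h1 ih1 =>
    refine ⟨.lam ih1.1, ?_⟩
    rintro ⟨t', hs⟩
    cases hs with
    | base hb =>
      rcases hb with hb | hb
      · cases hb
      · obtain ⟨e, s, heq, hsh⟩ := ccbase_inv hb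
        cases e <;> simp [plug] at heq
    | lam h => exact ih1.2 ⟨_, h⟩
  | inl h1 ih1 =>
    refine ⟨.inl ih1.1, ?_⟩
    rintro ⟨t', hs⟩
    cases hs with
    | base hb =>
      rcases hb with hb | hb
      · cases hb
      · obtain ⟨e, s, heq, hsh⟩ := ccbase_inv hb
        cases e <;> simp [plug] at heq
    | inl h => exact ih1.2 ⟨_, h⟩
  | inr h1 ih1 =>
    refine ⟨.inr ih1.1, ?_⟩
    rintro ⟨t', hs⟩
    cases hs with
    | base hb =>
      rcases hb with hb | hb
      · cases hb
      · obtain ⟨e, s, heq, hsh⟩ := ccbase_inv hb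
        cases e <;> simp [plug] at heq
    | inr h => exact ih1.2 ⟨_, h⟩
  | demote h1 heq ih1 => exact heq ▸ ih1.1
  | raise h1 ih1 =>
    refine ⟨.raise ih1.1.1, ?_⟩
    rintro ⟨t', hs⟩
    cases hs with
    | base hb =>
      rcases hb with hb | hb
      · cases hb
      · obtain ⟨e, s, heq, hsh⟩ := ccbase_inv hb
        cases e <;> simp [plug] at heq
    | raise h => exact ih1.1.2 ⟨_, h⟩
  | case hs hl hr ihs ihl ihr =>
    refine ⟨.case ihs.1.1 ihl.1 ihr.1, ?_⟩
    rintro ⟨t', hstep⟩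
    cases hstep with
    | base hb =>
      rcases hb with hb | hb
      · cases hb <;> exact absurd ihs.2 (by simp [Neutral])
      · obtain ⟨e, s', heq, hsh⟩ := ccbase_inv hb
        cases e <;> simp [plug] at heq
        obtain ⟨rfl, -, -⟩ := heq
        exact neutral_not_scrutinee ihs.2 hsh
    | caseS h => exact ihs.1.2 ⟨_, h⟩
    | caseL h => exact ihl.2 ⟨_, h⟩
    | caseR h => exact ihr.2 ⟨_, h⟩
  | cst Γ c =>
    refine ⟨⟨.cst Γ c, ?_⟩, trivial⟩
    rintro ⟨t', hs⟩
    cases hs with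
    | base hb =>
      rcases hb with hb | hb
      · cases hb
      · obtain ⟨e, s, heq, hsh⟩ := ccbase_inv hb
        cases e <;> simp [plug] at heq
  | var hΓ =>
    refine ⟨⟨.var hΓ, ?_⟩, trivial⟩
    rintro ⟨t', hs⟩
    cases hs with
    | base hb =>
      rcases hb with hb | hb
      · cases hb
      · obtain ⟨e, s, heq, hsh⟩ := ccbase_inv hb
        cases e <;> simp [plug] at heq
  | proj1 h1 ih1 =>
    refine ⟨⟨.proj1 ih1.1.1, ?_⟩, trivial⟩
    rintro ⟨t', hs⟩
    cases hs with
    | base hb =>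
      rcases hb with hb | hb
      · cases hb; exact absurd ih1.2 (by simp [Neutral])
      · obtain ⟨e, s, heq, hsh⟩ := ccbase_inv hb
        cases e <;> simp [plug] at heq
        subst heq
        exact neutral_not_scrutinee ih1.2 hsh
    | proj1 h => exact ih1.1.2 ⟨_, h⟩
  | proj2 h1 ih1 =>
    refine ⟨⟨.proj2 ih1.1.1, ?_⟩, trivial⟩
    rintro ⟨t', hs⟩
    cases hs with
    | base hb =>
      rcases hb with hb | hb
      · cases hb; exact absurd ih1.2 (by simp [Neutral])
      · obtain ⟨e, s, heq, hsh⟩ := ccbase_inv hb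
        cases e <;> simp [plug] at heq
        subst heq
        exact neutral_not_scrutinee ih1.2 hsh
    | proj2 h => exact ih1.1.2 ⟨_, h⟩
  | app h1 h2 ih1 ih2 =>
    refine ⟨⟨.app ih1.1.1 ih2.1, ?_⟩, trivial⟩
    rintro ⟨t', hs⟩
    cases hs with
    | base hb =>
      rcases hb with hb | hb
      · cases hb; exact absurd ih1.2 (by simp [Neutral])
      · obtain ⟨e, s, heq, hsh⟩ := ccbase_inv hb
        cases e <;> simp [plug] at heq
        obtain ⟨rfl, -⟩ := heq
        exact neutral_not_scrutinee ih1.2 hsh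
    | appL h => exact ih1.1.2 ⟨_, h⟩
    | appR h => exact ih2.2 ⟨_, h⟩

/-- **Normality.** If `Γ ⊢ t ⇐ A` then `Γ ⊢ t : A` and `t` takes no
one-step reduction. -/
theorem normal_bidir {B C : Type} (tyof : C → Ty B)
    (Γ : List (Ty B)) (t : Tm C) (A : Ty B) (h : Check tyof Γ t A) :
    HasType tyof Γ t A ∧ ¬ ∃ t' : Tm C, Step t t' :=
  normal_bidir_aux tyof h

end STLCp
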